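/- arXiv:2011.08531 — 2 statements merged into one kernel-verified Lean document; each statement's English description precedes it below -/
import Mathlib

section
/- Let f^N_{s,t} : B^N_t → B^N_s (s ≤ t in the dyadic grid) be a generalized filtration on the binomial model. Then the experienced-path data form a generalized filtration: for all s ≤ t ≤ u in the grid, (1) f̃^N_{s,t} maps B̃^N_t into B̃^N_s; (2) f̃^N_{t,t} = id on B̃^N_t; (3) f̃^N_{s,t} ∘ f̃^N_{t,u} = f̃^N_{s,u}; and (4) each f̃^N_{s,t} is null-preserving with respect to P̃^N_t and P̃^N_s. -/
abbrev BB (n : ℕ) : Type := Fin n → Bool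

def full {m n : ℕ} (h : m ≤ n) (ω : BB n) : BB m := fun i => ω (Fin.castLE h i)

def drop {m n : ℕ} (h : m ≤ n) (ω : BB n) : BB m :=
  fun i => if (i : ℕ) + 1 = m then false else ω (Fin.castLE h i)

open Classical in
noncomputable def msr {α : Type*} [Fintype α] (w : α → ℝ) (A : Set α) : ℝ :=
  ∑ ω : α, if ω ∈ A then w ω else 0

def NullPres {α β : Type*} [Fintype α] [Fintype β]
    (f : α → β) (wa : α → ℝ) (wb : β → ℝ) : Prop :=
  ∀ A : Set β, msr wb A = 0 → msr wa (f ⁻¹' A) = 0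

noncomputable def wP (p : ℕ → ℝ) (n : ℕ) (ω : BB n) : ℝ :=
  ∏ i : Fin n, if ω i then p ((i : ℕ) + 1) else 1 - p ((i : ℕ) + 1)

noncomputable def xi {n : ℕ} (ω : BB (n + 1)) : ℝ :=
  2 * (if ω (Fin.last n) then (1 : ℝ) else 0) - 1

def IsCondExp {α β : Type*} [Fintype α] [Fintype β]
    (wa : α → ℝ) (wb : β → ℝ) (f : α → β) (X : α → ℝ) (Y : β → ℝ) : Prop :=
  ∀ A : Set β,
    msr (fun b => Y b * wb b) A = msr (fun a => X a * wa a) (f ⁻¹' A)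

/-- The experienced path map `e_t : B^N_t → B^N_t`, `e_t(ω)(s) := f^N_{s,t}(ω)(s)`. -/
def expPath (F : ∀ ⦃m n : ℕ⦄, m ≤ n → BB n → BB m) {n : ℕ} (ω : BB n) : BB n :=
  fun i => F (Nat.succ_le_of_lt i.isLt) ω (Fin.last (i : ℕ))

/-! By the composition law the experienced path intertwines the filtration with restriction,
`full h ∘ e_t = e_s ∘ f_{s,t}`. So restriction maps experienced paths to experienced paths, and
the `e`-preimage of a restriction-preimage is an `f`-preimage of an `e`-preimage, which lets
null-preservation pass from `f` to `f̃`. Identity and composition of `f̃` hold definitionally. -/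

section ExperiencedPath

variable {F : ∀ ⦃m n : ℕ⦄, m ≤ n → BB n → BB m} {m n : ℕ}

theorem full_expPath
    (hcomp : ∀ {k m n : ℕ} (h1 : k ≤ m) (h2 : m ≤ n) (ω : BB n),
      F h1 (F h2 ω) = F (h1.trans h2) ω)
    (h : m ≤ n) (ω : BB n) :
    full h (expPath F ω) = expPath F (F h ω) := by
  funext i
  simp only [full, expPath, hcomp, Fin.val_castLE]

theorem preimage_expPath_preimage_full
    (hcomp : ∀ {k m n : ℕ} (h1 : k ≤ m) (h2 : m ≤ n) (ω : BB n),
      F h1 (F h2 ω) = F (h1.trans h2) ω)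
    (h : m ≤ n) (A : Set (BB m)) :
    expPath F ⁻¹' (full h ⁻¹' A) = F h ⁻¹' (expPath F ⁻¹' A) := by
  ext ω
  simp only [Set.mem_preimage, full_expPath hcomp h ω]

end ExperiencedPath

theorem experienced_filtration_is_filtration_general
    (p : ℕ → ℝ)
    (F : ∀ ⦃m n : ℕ⦄, m ≤ n → BB n → BB m)
    (hcomp : ∀ {k m n : ℕ} (h1 : k ≤ m) (h2 : m ≤ n) (ω : BB n),
      F h1 (F h2 ω) = F (h1.trans h2) ω)
    (hnull : ∀ {m n : ℕ} (h : m ≤ n), NullPres (F h) (wP p n) (wP p m)) :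
    (∀ (m n : ℕ) (h : m ≤ n) (ω : BB n),
      full h (expPath F ω) ∈ Set.range (fun ω' : BB m => expPath F ω')) ∧
    (∀ (n : ℕ) (ω : BB n),
      ω ∈ Set.range (fun ω' : BB n => expPath F ω') → full (le_refl n) ω = ω) ∧
    (∀ (k m n : ℕ) (h1 : k ≤ m) (h2 : m ≤ n) (ω : BB n),
      ω ∈ Set.range (fun ω' : BB n => expPath F ω') →
        full h1 (full h2 ω) = full (h1.trans h2) ω) ∧
    (∀ (m n : ℕ) (h : m ≤ n) (A : Set (BB m)),
      msr (wP p m) (expPath F ⁻¹' A) = 0 →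
        msr (wP p n) (expPath F ⁻¹' (full h ⁻¹' A)) = 0) := by
  refine ⟨fun _ _ h ω => ⟨F h ω, (full_expPath hcomp h ω).symm⟩,
    fun _ _ _ => rfl, fun _ _ _ _ _ _ _ => rfl, fun _ _ h A hA => ?_⟩
  rw [preimage_expPath_preimage_full hcomp h A]
  exact hnull h _ hA

/-- Given a generalized filtration `f^N_{s,t}` on the binomial model, the
experienced-path data `(B̃^N_t = e_t(B^N_t), P̃^N_t = P^N_t ∘ e_t⁻¹, f̃^N_{s,t} = full|_{B̃^N_t})`
form a generalized filtration: (1) `f̃^N_{s,t}` maps `B̃^N_t` into `B̃^N_s`; (2) `f̃^N_{t,t}`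
is the identity on `B̃^N_t`; (3) `f̃^N_{s,t} ∘ f̃^N_{t,u} = f̃^N_{s,u}` on `B̃^N_u`; and
(4) each `f̃^N_{s,t}` is null-preserving with respect to `P̃^N_t` and `P̃^N_s`
(the `P̃`-measure of a set being the `P`-measure of its `e`-preimage). -/
theorem experienced_filtration_is_filtration
    (p : ℕ → ℝ) (hp0 : ∀ k, 0 ≤ p k) (hp1 : ∀ k, p k ≤ 1)
    (F : ∀ ⦃m n : ℕ⦄, m ≤ n → BB n → BB m)
    (hid : ∀ (n : ℕ) (ω : BB n), F (le_refl n) ω = ω)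
    (hcomp : ∀ {k m n : ℕ} (h1 : k ≤ m) (h2 : m ≤ n) (ω : BB n),
      F h1 (F h2 ω) = F (h1.trans h2) ω)
    (hnull : ∀ {m n : ℕ} (h : m ≤ n), NullPres (F h) (wP p n) (wP p m)) :
    (∀ (m n : ℕ) (h : m ≤ n) (ω : BB n),
      full h (expPath F ω) ∈ Set.range (fun ω' : BB m => expPath F ω')) ∧
    (∀ (n : ℕ) (ω : BB n),
      ω ∈ Set.range (fun ω' : BB n => expPath F ω') → full (le_refl n) ω = ω) ∧
    (∀ (k m n : ℕ) (h1 : k ≤ m) (h2 : m ≤ n) (ω : BB n),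
      ω ∈ Set.range (fun ω' : BB n => expPath F ω') →
        full h1 (full h2 ω) = full (h1.trans h2) ω) ∧
    (∀ (m n : ℕ) (h : m ≤ n) (A : Set (BB m)),
      msr (wP p m) (expPath F ⁻¹' A) = 0 →
        msr (wP p n) (expPath F ⁻¹' (full h ⁻¹' A)) = 0) :=
  experienced_filtration_is_filtration_general p F hcomp hnull
end

section
/- Let f^N_{s,t} : B^N_t → B^N_s (s ≤ t in the dyadic grid) be a generalized filtration on the binomial model. Then for all s ≤ t in the grid, e_s ∘ f^N_{s,t} = f̃^N_{s,t} ∘ e_t as functions B^N_t → B̃^N_s (naturality of the experienced-path maps). -/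
theorem experienced_path_natural_general
    (F : ∀ ⦃m n : ℕ⦄, m ≤ n → BB n → BB m)
    (hcomp : ∀ {k m n : ℕ} (h1 : k ≤ m) (h2 : m ≤ n) (ω : BB n),
      F h1 (F h2 ω) = F (h1.trans h2) ω) :
    ∀ (m n : ℕ) (h : m ≤ n) (ω : BB n),
      expPath F (F h ω) = full h (expPath F ω) :=
  -- coordinate `i` is `f_{i+1,m} (f_{m,n} ω)` on the left and `f_{i+1,n} ω` on the right
  fun _ _ h ω => funext fun i => congrFun (hcomp (Nat.succ_le_of_lt i.isLt) h ω) _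

/-- For a generalized filtration `f^N_{s,t}` on the binomial model, the
experienced-path maps are natural: `e_s ∘ f^N_{s,t} = f̃^N_{s,t} ∘ e_t` for all `s ≤ t`
(where `f̃^N_{s,t}` is the restriction of `full^N_{s,t}` to `B̃^N_t`, so on `e_t(B^N_t)`
it is given by `full^N_{s,t}`). -/
theorem experienced_path_natural
    (F : ∀ ⦃m n : ℕ⦄, m ≤ n → BB n → BB m)
    (hid : ∀ (n : ℕ) (ω : BB n), F (le_refl n) ω = ω)
    (hcomp : ∀ {k m n : ℕ} (h1 : k ≤ m) (h2 : m ≤ n) (ω : BB n),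
      F h1 (F h2 ω) = F (h1.trans h2) ω) :
    ∀ (m n : ℕ) (h : m ≤ n) (ω : BB n),
      expPath F (F h ω) = full h (expPath F ω) :=
  experienced_path_natural_general F hcomp
end
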